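/- Under the Protocol 1 model: if N ≥ 2 and an attack (U_E, {U_F^{(r)}}) satisfies the no-error conditions (T'), (Z') and (X'), then for each 0 ≤ r ≤ N there exists a family of unit vectors G_{r,w} ∈ EuclideanSpace ℂ (Fin d), indexed only by the Hamming weight w (0 ≤ w ≤ N − r), such that for every injective s : Fin r ↪ Fin N, every input φ ∈ EuclideanSpace ℂ (Fin N → Bool), the final global state (U_F^{(r)} ⊗ Id)(R_s(U_E(ε₀ ⊗ φ))) equals Σ_i φ(i) · G_{r, wt(i∘s̄)} ⊗ δ_{i∘s} ⊗ δ_{i∘s̄}, where R_s is the sorting unitary defined in the context. In particular, Eve's final probe state depends at most on the Hamming weight of the string measured by Bob. -/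

import Mathlib

/-!
Protocol 1 model (randomization-based semi-quantum key distribution):
see Boyer, Gelles, Kenigsberg, Mor, "Semi-Quantum Key Distribution".
-/

namespace SQKD1

/-- Bitstrings of length `N`. -/
abbrev Bits (N : ℕ) := Fin N → Bool

/-- The space attacked by `U_E`: Eve's probe together with the `N` travelling
qubits. -/
abbrev HE (N d : ℕ) := EuclideanSpace ℂ (Fin d × Bits N)

/-- The space attacked by `U_F^{(r)}`: Eve's probe together with the `r`
reflected qubits. -/
abbrev HF (d r : ℕ) := EuclideanSpace ℂ (Fin d × (Fin r → Bool))

/-- Hamming weight of a bitstring. -/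
def wt {n : ℕ} (y : Fin n → Bool) : ℕ := (Finset.univ.filter fun k => y k = true).card

/-- The elementary tensor `v ⊗ δ_u` of a vector `v` of Eve's probe space with a
standard basis vector `δ_u`. -/
noncomputable def tprod {d : ℕ} {ι : Type*} [DecidableEq ι]
    (v : EuclideanSpace ℂ (Fin d)) (u : ι) : EuclideanSpace ℂ (Fin d × ι) :=
  WithLp.toLp 2 (fun p : Fin d × ι => if p.2 = u then v p.1 else 0)

/-- Condition (T'): no error on TEST bits; `U_E (ε₀ ⊗ δ_i) = E_i ⊗ δ_i`. -/
def CondT {N d : ℕ} (hd : 0 < d) (UE : HE N d ≃ₗᵢ[ℂ] HE N d)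
    (E : Bits N → EuclideanSpace ℂ (Fin d)) : Prop :=
  ∀ i : Bits N,
    UE (EuclideanSpace.single ((⟨0, hd⟩ : Fin d), i) 1) = tprod (E i) i

/-- Condition (Z'): no error on Z-CTRL bits;
`U_F^{(r)} (E_i ⊗ δ_{i∘s}) = F_{s,i} ⊗ δ_{i∘s}`. -/
def CondZ {N d : ℕ} (UF : (r : ℕ) → r ≤ N → (HF d r ≃ₗᵢ[ℂ] HF d r))
    (E : Bits N → EuclideanSpace ℂ (Fin d))
    (F : (r : ℕ) → r ≤ N → (Fin r ↪ Fin N) → Bits N → EuclideanSpace ℂ (Fin d)) :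
    Prop :=
  ∀ (r : ℕ) (hr : r ≤ N) (s : Fin r ↪ Fin N) (i : Bits N),
    UF r hr (tprod (E i) (fun p => i (s p))) = tprod (F r hr s i) (fun p => i (s p))

/-- Condition (X'): no error on X-CTRL bits.  For `k := s p`, `i k = false` and
`i'` equal to `i` with bit `k` flipped, the state
`Φ = (1/√2)(F_{s,i} ⊗ δ_{i∘s} + F_{s,i'} ⊗ δ_{i'∘s})` has, at every index
`(a,t)`, the same coefficient as at `(a, t')`, where `t'` is `t` with bit `p`
flipped. -/
def CondX {N d : ℕ}
    (F : (r : ℕ) → r ≤ N → (Fin r ↪ Fin N) → Bits N → EuclideanSpace ℂ (Fin d)) :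
    Prop :=
  ∀ (r : ℕ) (hr : r ≤ N) (s : Fin r ↪ Fin N) (p : Fin r) (i : Bits N),
    i (s p) = false →
      ∀ (a : Fin d) (t : Fin r → Bool),
        ((Real.sqrt 2 : ℂ)⁻¹ •
            (tprod (F r hr s i) (fun q => i (s q)) +
              tprod (F r hr s (Function.update i (s p) true))
                (fun q => Function.update i (s p) true (s q)))) (a, t) =
        ((Real.sqrt 2 : ℂ)⁻¹ •
            (tprod (F r hr s i) (fun q => i (s q)) +
              tprod (F r hr s (Function.update i (s p) true))
                (fun q => Function.update i (s p) true (s q))))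
          (a, Function.update t p (!(t p)))

/-- Hamming weight of the substring of `i` kept (measured) by Bob, i.e. of the
restriction of `i` to the complement of the range of `s`. -/
def wtKept {N r : ℕ} (s : Fin r ↪ Fin N) (i : Bits N) : ℕ :=
  (Finset.univ.filter fun k => k ∉ Finset.univ.map s ∧ i k = true).card

/-- The complement `C_s` of the range of `s` (the positions kept by Bob). -/
def Comp {N r : ℕ} (s : Fin r ↪ Fin N) : Type :=
  {k : Fin N // k ∉ Finset.univ.map s}

instance {N r : ℕ} (s : Fin r ↪ Fin N) : Fintype (Comp s) :=
  Subtype.fintype _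

instance {N r : ℕ} (s : Fin r ↪ Fin N) : DecidableEq (Comp s) :=
  Subtype.instDecidableEq

/-- The target space of the sorting unitary `R_s`: Eve's probe, the `r`
reflected qubits, and the `N - r` qubits kept by Bob. -/
abbrev HT (d : ℕ) {N r : ℕ} (s : Fin r ↪ Fin N) :=
  EuclideanSpace ℂ (Fin d × (Fin r → Bool) × (Comp s → Bool))

/-- The restriction `i∘s̄` of a bitstring to the complement of the range of `s`. -/
def kept {N r : ℕ} (s : Fin r ↪ Fin N) (i : Bits N) : Comp s → Bool :=
  fun c => i c.1

/-- The elementary tensor `v ⊗ δ_u` of a vector `v` of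
`EuclideanSpace ℂ (Fin d × (Fin r → Bool))` with a standard basis vector
`δ_u`, `u : Comp s → Bool`. -/
noncomputable def tprod3 {d N r : ℕ} (s : Fin r ↪ Fin N)
    (v : HF d r) (u : Comp s → Bool) : HT d s :=
  WithLp.toLp 2 (fun q : Fin d × (Fin r → Bool) × (Comp s → Bool) =>
    if q.2.2 = u then v (q.1, q.2.1) else 0)

/-- The initial state `ε₀ ⊗ φ` for Alice's input `φ`. -/
noncomputable def init {N d : ℕ} (hd : 0 < d) (φ : EuclideanSpace ℂ (Bits N)) :
    HE N d :=
  WithLp.toLp 2 (fun q : Fin d × Bits N => if q.1 = (⟨0, hd⟩ : Fin d) then φ q.2 else 0)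

/-!
By (X'), `F_{s,i}` does not change when a reflected bit of `i` is flipped, so it depends only on
the bits of `i` kept by Bob. Since `U_F^{(r)}` does not depend on `s`, (Z') shows that
`E_i = E_{i'}` iff `F_{s,i} = F_{s',i'}` whenever `i∘s = i'∘s'`. For `r = 1` the two facts let us
move the reflected position from `c'` to `c` while overwriting the reflected bit, which
exchanges the bits of `i` at `c` and `c'`: hence `E_i` is invariant under permutations of the
positions and depends only on `wt i`. Clearing the reflected bits of `i` then shows that
`F_{s,i}` depends only on the weight of the kept substring, and `G` is read off from `F`.
-/

section Tensors

variable {d : ℕ} {ι κ : Type*} [DecidableEq ι] [DecidableEq κ]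

lemma tprod_apply (v : EuclideanSpace ℂ (Fin d)) (u : ι) (a : Fin d) (j : ι) :
    tprod v u (a, j) = if j = u then v a else 0 := rfl

lemma tprod_left_injective (u : ι) :
    Function.Injective fun v : EuclideanSpace ℂ (Fin d) => tprod v u := by
  intro v w h
  ext a
  simpa [tprod_apply] using congrArg (fun x => x (a, u)) h

lemma norm_tprod [Fintype ι] (v : EuclideanSpace ℂ (Fin d)) (u : ι) : ‖tprod v u‖ = ‖v‖ := by
  simp only [EuclideanSpace.norm_eq, Fintype.sum_prod_type]
  simp [tprod_apply, apply_ite norm]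

lemma tprod_eq_sum_single (v : EuclideanSpace ℂ (Fin d)) (u : ι) :
    tprod v u = ∑ a, v a • EuclideanSpace.single (a, u) (1 : ℂ) := by
  ext ⟨a, j⟩
  simp [tprod_apply, Pi.single_apply, Prod.ext_iff, ite_and]

lemma map_tprod {L : Type*}
    [FunLike L (EuclideanSpace ℂ (Fin d × ι)) (EuclideanSpace ℂ (Fin d × κ))]
    [LinearMapClass L ℂ _ _] (f : L) (g : ι → κ)
    (hf : ∀ a i, f (EuclideanSpace.single (a, i) 1) = EuclideanSpace.single (a, g i) 1)
    (v : EuclideanSpace ℂ (Fin d)) (i : ι) : f (tprod v i) = tprod v (g i) := by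
  simp only [tprod_eq_sum_single, map_sum, map_smul, hf]

end Tensors

lemma tprod3_tprod {d N r : ℕ} (s : Fin r ↪ Fin N) (v : EuclideanSpace ℂ (Fin d))
    (t : Fin r → Bool) (u : Comp s → Bool) : tprod3 s (tprod v t) u = tprod v (t, u) := by
  ext ⟨a, t', u'⟩
  simp only [tprod3, tprod_apply, Prod.ext_iff]
  by_cases hu : u' = u <;> simp [hu]

lemma init_eq_sum_single {N d : ℕ} (hd : 0 < d) (φ : EuclideanSpace ℂ (Bits N)) :
    init hd φ = ∑ i, φ i • EuclideanSpace.single (((⟨0, hd⟩ : Fin d), i)) (1 : ℂ) := by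
  ext ⟨a, j⟩
  simp [init, Pi.single_apply, Prod.ext_iff, ite_and]

lemma apply_eq_of_update_invariant {ι β γ : Type*} [DecidableEq ι] {f : (ι → β) → γ}
    (S : Finset ι) (hf : ∀ x, ∀ k ∈ S, ∀ b, f (Function.update x k b) = f x)
    {x y : ι → β} (hxy : ∀ k ∉ S, x k = y k) : f x = f y := by
  have key : ∀ T ⊆ S, f (T.piecewise y x) = f x := by
    intro T
    induction T using Finset.induction_on with
    | empty => simp
    | insert k T _ ih =>
      intro hTS
      rw [Finset.piecewise_insert, hf _ k (hTS (Finset.mem_insert_self k T)),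
        ih ((Finset.subset_insert k T).trans hTS)]
  rw [← key S subset_rfl]
  congr 1
  funext k
  by_cases hk : k ∈ S <;> simp [hk, hxy]

lemma exists_perm_comp_eq {α β : Type*} [Fintype α] [DecidableEq β] (f g : α → β)
    (h : ∀ b, Fintype.card {a // f a = b} = Fintype.card {a // g a = b}) :
    ∃ σ : Equiv.Perm α, g ∘ σ = f :=
  ⟨Equiv.ofFiberEquiv fun b => Fintype.equivOfCardEq (h b), funext (Equiv.ofFiberEquiv_map _)⟩

lemma exists_factor_mem_range_of_factorsThrough {α β γ : Type*} [Nonempty α] {f : α → γ}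
    {g : α → β} (hf : f.FactorsThrough g) :
    ∃ G : β → γ, (∀ b, G b ∈ Set.range f) ∧ ∀ a, f a = G (g a) := by
  obtain ⟨a₀⟩ := ‹Nonempty α›
  refine ⟨Function.extend g f fun _ => f a₀, fun b => ?_, fun a => (hf.extend_apply _ a).symm⟩
  by_cases hb : ∃ a, g a = b
  · obtain ⟨a, rfl⟩ := hb
    exact ⟨a, (hf.extend_apply _ a).symm⟩
  · rw [Function.extend_apply' _ _ _ hb]
    exact ⟨a₀, rfl⟩

lemma card_fiber_eq_of_wt_eq {N : ℕ} {i j : Bits N} (h : wt i = wt j) (b : Bool) :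
    Fintype.card {k // i k = b} = Fintype.card {k // j k = b} := by
  have hsplit : ∀ i : Bits N, Fintype.card {k // i k = false} + wt i = N := fun i => by
    rw [Fintype.card_subtype, wt, add_comm]
    simpa using Finset.card_filter_add_card_filter_not (s := Finset.univ) (fun k => i k = true)
  cases b
  · have := hsplit i
    have := hsplit j
    omega
  · simpa [Fintype.card_subtype, wt] using h

def clearReflected {N r : ℕ} (s : Fin r ↪ Fin N) (i : Bits N) : Bits N :=
  fun k => if k ∈ Finset.univ.map s then false else i k

lemma clearReflected_apply_emb {N r : ℕ} (s : Fin r ↪ Fin N) (i : Bits N) (p : Fin r) :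
    clearReflected s i (s p) = false := by
  simp [clearReflected]

lemma wt_clearReflected {N r : ℕ} (s : Fin r ↪ Fin N) (i : Bits N) :
    wt (clearReflected s i) = wtKept s i := by
  unfold wt wtKept
  congr 1
  ext k
  simp [clearReflected]

def pointEmb {N : ℕ} (c : Fin N) : Fin 1 ↪ Fin N :=
  ⟨fun _ => c, Function.injective_of_subsingleton _⟩

section Attack

variable {N d : ℕ} {UE : HE N d ≃ₗᵢ[ℂ] HE N d} {UF : (r : ℕ) → r ≤ N → (HF d r ≃ₗᵢ[ℂ] HF d r)}
  {E : Bits N → EuclideanSpace ℂ (Fin d)}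
  {F : (r : ℕ) → r ≤ N → (Fin r ↪ Fin N) → Bits N → EuclideanSpace ℂ (Fin d)}

lemma CondT.norm_eq_one {hd : 0 < d} (hT : CondT hd UE E) (i : Bits N) : ‖E i‖ = 1 := by
  rw [← norm_tprod (E i) i, ← hT i, LinearIsometryEquiv.norm_map, PiLp.norm_single,
    norm_one]

lemma CondZ.norm_F_eq (hZ : CondZ UF E F) {r : ℕ} (hr : r ≤ N) (s : Fin r ↪ Fin N)
    (i : Bits N) : ‖F r hr s i‖ = ‖E i‖ := by
  rw [← norm_tprod (F r hr s i) fun p => i (s p), ← hZ, LinearIsometryEquiv.norm_map, norm_tprod]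

lemma CondZ.E_eq_iff_F_eq (hZ : CondZ UF E F) {r : ℕ} (hr : r ≤ N) {s s' : Fin r ↪ Fin N}
    {i i' : Bits N} (h : (fun p => i (s p)) = fun p => i' (s' p)) :
    E i = E i' ↔ F r hr s i = F r hr s' i' := by
  have hi := hZ r hr s i
  have hi' := hZ r hr s' i'
  rw [← h] at hi'
  rw [← (tprod_left_injective fun p => i (s p)).eq_iff, ← (UF r hr).injective.eq_iff, hi, hi',
    (tprod_left_injective _).eq_iff]

lemma CondX.F_update_true (hX : CondX F) {r : ℕ} (hr : r ≤ N) (s : Fin r ↪ Fin N) (p : Fin r)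
    {i : Bits N} (hi : i (s p) = false) :
    F r hr s (Function.update i (s p) true) = F r hr s i := by
  ext a
  have hne : (fun q => Function.update i (s p) true (s q)) ≠ fun q => i (s q) :=
    fun h => by simpa [hi] using congrFun h p
  have hflip : Function.update (fun q => i (s q)) p (!i (s p)) =
      fun q => Function.update i (s p) true (s q) := by
    rw [hi]
    exact (Function.update_comp_eq_of_injective i s.injective p true).symm
  have h := hX r hr s p i hi a fun q => i (s q)
  rw [hflip] at h
  simpa [tprod_apply, hne, hne.symm] using h.symm

lemma CondX.F_update (hX : CondX F) {r : ℕ} (hr : r ≤ N) (s : Fin r ↪ Fin N) (p : Fin r)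
    (i : Bits N) (b : Bool) : F r hr s (Function.update i (s p) b) = F r hr s i := by
  have hfalse : ∀ b, F r hr s (Function.update i (s p) b) =
      F r hr s (Function.update i (s p) false) := by
    intro b
    cases b
    · rfl
    · have := hX.F_update_true hr s p (i := Function.update i (s p) false) (by simp)
      rwa [Function.update_idem] at this
  rw [hfalse b, ← hfalse (i (s p)), Function.update_eq_self]

lemma CondX.F_eq_of_eqOn_compl (hX : CondX F) {r : ℕ} (hr : r ≤ N) (s : Fin r ↪ Fin N)
    {i i' : Bits N} (h : ∀ k ∉ Finset.univ.map s, i k = i' k) : F r hr s i = F r hr s i' :=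
  apply_eq_of_update_invariant (Finset.univ.map s)
    (fun x k hk b => by
      obtain ⟨p, -, rfl⟩ := Finset.mem_map.1 hk
      exact hX.F_update hr s p x b) h

lemma E_comp_swap (hX : CondX F) (hZ : CondZ UF E F) (i : Bits N) (c c' : Fin N) :
    E (i ∘ Equiv.swap c c') = E i := by
  have h1 : 1 ≤ N := c.pos
  set j := i ∘ Equiv.swap c c'
  set m := Function.update i c' (i c)
  have hjm : Function.update j c (i c) = m := by
    funext x
    simp only [j, m, Function.update, Function.comp_apply, Equiv.swap_apply_def]
    split_ifs <;> simp_all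
  refine ((hZ.E_eq_iff_F_eq h1 (s := pointEmb c') (s' := pointEmb c) ?_).2 ?_).symm
  · funext _
    simp [pointEmb, j]
  calc F 1 h1 (pointEmb c') i = F 1 h1 (pointEmb c') m :=
        (hX.F_update h1 (pointEmb c') 0 i (i c)).symm
    _ = F 1 h1 (pointEmb c) m := (hZ.E_eq_iff_F_eq h1 (by funext _; simp [pointEmb, m, Function.update_apply])).1 rfl
    _ = F 1 h1 (pointEmb c) j := by
        rw [← hjm]
        exact hX.F_update h1 (pointEmb c) 0 j (i c)

lemma E_eq_of_wt_eq (hX : CondX F) (hZ : CondZ UF E F) {i j : Bits N} (h : wt i = wt j) :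
    E i = E j := by
  obtain ⟨σ, rfl⟩ := exists_perm_comp_eq j i (card_fiber_eq_of_wt_eq h.symm)
  clear h
  induction σ using Equiv.Perm.swap_induction_on' with
  | one => rfl
  | mul_swap σ c c' _ ih =>
    rw [Equiv.Perm.coe_mul, ← Function.comp_assoc, E_comp_swap hX hZ, ih]

lemma F_eq_of_wtKept_eq (hX : CondX F) (hZ : CondZ UF E F) {r : ℕ} (hr : r ≤ N)
    {s s' : Fin r ↪ Fin N} {i i' : Bits N} (h : wtKept s i = wtKept s' i') :
    F r hr s i = F r hr s' i' := by
  have hclear : ∀ (s : Fin r ↪ Fin N) i, F r hr s i = F r hr s (clearReflected s i) :=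
    fun s i => hX.F_eq_of_eqOn_compl hr s fun k hk => by simp [clearReflected, hk]
  rw [hclear s, hclear s']
  refine (hZ.E_eq_iff_F_eq hr ?_).1 (E_eq_of_wt_eq hX hZ ?_)
  · simp only [clearReflected_apply_emb]
  · rw [wt_clearReflected, wt_clearReflected, h]

lemma exists_unit_probe_of_wtKept {hd : 0 < d} (hT : CondT hd UE E) (hZ : CondZ UF E F)
    (hX : CondX F) {r : ℕ} (hr : r ≤ N) :
    ∃ G : ℕ → EuclideanSpace ℂ (Fin d),
      (∀ w, ‖G w‖ = 1) ∧ ∀ s i, F r hr s i = G (wtKept s i) := by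
  have : Nonempty ((Fin r ↪ Fin N) × Bits N) := ⟨(Fin.castLEEmb hr, fun _ => false)⟩
  obtain ⟨G, hG_range, hG⟩ := exists_factor_mem_range_of_factorsThrough
    (f := fun x : (Fin r ↪ Fin N) × Bits N => F r hr x.1 x.2) (g := fun x => wtKept x.1 x.2)
    fun _ _ h => F_eq_of_wtKept_eq hX hZ hr h
  refine ⟨G, fun w => ?_, fun s i => hG (s, i)⟩
  obtain ⟨x, hx⟩ := hG_range w
  rw [← hx, hZ.norm_F_eq, hT.norm_eq_one]

lemma finalState_eq_sum {hd : 0 < d} (hT : CondT hd UE E) (hZ : CondZ UF E F) {r : ℕ}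
    (hr : r ≤ N) (s : Fin r ↪ Fin N) (R : HE N d ≃ₗᵢ[ℂ] HT d s) (Gm : HT d s ≃ₗᵢ[ℂ] HT d s)
    (hR : ∀ (a : Fin d) (i : Bits N), R (EuclideanSpace.single (a, i) 1) =
      EuclideanSpace.single (a, fun p => i (s p), kept s i) 1)
    (hGm : ∀ (v : HF d r) (u : Comp s → Bool), Gm (tprod3 s v u) = tprod3 s (UF r hr v) u)
    (φ : EuclideanSpace ℂ (Bits N)) :
    Gm (R (UE (init hd φ))) = ∑ i, φ i • tprod (F r hr s i) (fun p => i (s p), kept s i) := by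
  simp only [init_eq_sum_single, map_sum, map_smul]
  congr! 2 with i
  rw [hT i, map_tprod R (fun i => (fun p => i (s p), kept s i)) hR, ← tprod3_tprod, hGm, hZ,
    tprod3_tprod]

end Attack

theorem protocol1_partial_robustness_general (N d : ℕ) (hd : 0 < d)
    (UE : HE N d ≃ₗᵢ[ℂ] HE N d)
    (UF : (r : ℕ) → r ≤ N → (HF d r ≃ₗᵢ[ℂ] HF d r))
    (E : Bits N → EuclideanSpace ℂ (Fin d))
    (F : (r : ℕ) → r ≤ N → (Fin r ↪ Fin N) → Bits N → EuclideanSpace ℂ (Fin d))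
    (hT : CondT hd UE E) (hZ : CondZ UF E F) (hX : CondX F) :
    ∀ (r : ℕ) (hr : r ≤ N),
      ∃ G : ℕ → EuclideanSpace ℂ (Fin d),
        (∀ w ≤ N - r, ‖G w‖ = 1) ∧
        ∀ (s : Fin r ↪ Fin N)
          (R : HE N d ≃ₗᵢ[ℂ] HT d s) (Gm : HT d s ≃ₗᵢ[ℂ] HT d s),
          -- `R` is the sorting unitary `R_s`,
          (∀ (a : Fin d) (i : Bits N),
            R (EuclideanSpace.single (a, i) 1) =
              EuclideanSpace.single (a, fun p => i (s p), kept s i) 1) →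
          -- and `Gm` is `U_F^{(r)} ⊗ Id`:
          (∀ (v : HF d r) (u : Comp s → Bool),
            Gm (tprod3 s v u) = tprod3 s (UF r hr v) u) →
          ∀ (φ : EuclideanSpace ℂ (Bits N)) (a : Fin d) (t : Fin r → Bool)
            (u : Comp s → Bool),
            Gm (R (UE (init hd φ))) (a, t, u) =
              ∑ i : Bits N,
                if t = (fun p => i (s p)) ∧ u = kept s i then
                  φ i * G (wtKept s i) a
                else 0 := by
  intro r hr
  obtain ⟨G, hG_norm, hFG⟩ := exists_unit_probe_of_wtKept hT hZ hX hr
  refine ⟨G, fun w _ => hG_norm w, fun s R Gm hR hGm φ a t u => ?_⟩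
  rw [finalState_eq_sum hT hZ hr s R Gm hR hGm φ]
  simp [tprod_apply, hFG, Prod.ext_iff]

/-- **Theorem 2 of the paper.** If `N ≥ 2` and the attack induces
no error on TEST and CTRL bits, then for each `r ≤ N` there is a family of unit
vectors `G w` (for Hamming weights `w ≤ N - r`) such that for every injection
`s`, every sorting unitary `R_s` and every unitary `Gm = U_F^{(r)} ⊗ Id`, and
every input `φ`, the final global state `(U_F^{(r)} ⊗ Id)(R_s(U_E(ε₀ ⊗ φ)))`
equals `Σ_i φ(i) · G (wt(i∘s̄)) ⊗ δ_{i∘s} ⊗ δ_{i∘s̄}`: Eve's final probe state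
depends at most on the Hamming weight of the string measured by Bob. -/
theorem protocol1_partial_robustness (N d : ℕ) (hN : 2 ≤ N) (hd : 0 < d)
    (UE : HE N d ≃ₗᵢ[ℂ] HE N d)
    (UF : (r : ℕ) → r ≤ N → (HF d r ≃ₗᵢ[ℂ] HF d r))
    (E : Bits N → EuclideanSpace ℂ (Fin d))
    (F : (r : ℕ) → r ≤ N → (Fin r ↪ Fin N) → Bits N → EuclideanSpace ℂ (Fin d))
    (hT : CondT hd UE E) (hZ : CondZ UF E F) (hX : CondX F) :
    ∀ (r : ℕ) (hr : r ≤ N),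
      ∃ G : ℕ → EuclideanSpace ℂ (Fin d),
        (∀ w ≤ N - r, ‖G w‖ = 1) ∧
        ∀ (s : Fin r ↪ Fin N)
          (R : HE N d ≃ₗᵢ[ℂ] HT d s) (Gm : HT d s ≃ₗᵢ[ℂ] HT d s),
          -- `R` is the sorting unitary `R_s`,
          (∀ (a : Fin d) (i : Bits N),
            R (EuclideanSpace.single (a, i) 1) =
              EuclideanSpace.single (a, fun p => i (s p), kept s i) 1) →
          -- and `Gm` is `U_F^{(r)} ⊗ Id`:
          (∀ (v : HF d r) (u : Comp s → Bool),
            Gm (tprod3 s v u) = tprod3 s (UF r hr v) u) →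
          ∀ (φ : EuclideanSpace ℂ (Bits N)) (a : Fin d) (t : Fin r → Bool)
            (u : Comp s → Bool),
            Gm (R (UE (init hd φ))) (a, t, u) =
              ∑ i : Bits N,
                if t = (fun p => i (s p)) ∧ u = kept s i then
                  φ i * G (wtKept s i) a
                else 0 :=
  protocol1_partial_robustness_general N d hd UE UF E F hT hZ hX

end SQKD1
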